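/- arXiv:2208.04821 — 3 statements merged into one kernel-verified Lean document; each statement's English description precedes it below -/
import Mathlib

section
/- Let Ω, Ω̃ ⊂ ℝ³ be open, let Φ : Ω → Ω̃ be a C² diffeomorphism, let k ∈ ℕ, and let A : Ω̃ → ℝ^{k×3} be a C¹ tensor field. Define the covariant Piola transform 𝒬_Φ(A) : Ω → ℝ^{k×3} by 𝒬_Φ(A)(x) := A(Φ(x)) ∇Φ(x). Then for every x ∈ Ω: Curl(𝒬_Φ(A))(x) = det∇Φ(x) · (Curl A)(Φ(x)) · (∇Φ(x))^{-T}. -/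
open MeasureTheory Set

noncomputable section

/-- Points of `ℝ³`. -/
abbrev V3 : Type := Fin 3 → ℝ

/-- `j`-th standard basis vector of `ℝ³`. -/
def e3 (j : Fin 3) : V3 := Pi.single j 1

/-- Classical partial derivative `∂_j f (x)` (via `fderiv`). -/
def pd (j : Fin 3) (f : V3 → ℝ) (x : V3) : ℝ := fderiv ℝ f x (e3 j)

/-- Classical gradient of a scalar function. -/
def gradv (φ : V3 → ℝ) (x : V3) : V3 := fun j => pd j φ x

/-- Euclidean scalar product. -/
def vdot {ι : Type} [Fintype ι] (a b : ι → ℝ) : ℝ := ∑ i, a i * b i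

/-- Frobenius scalar product of `n × 3` matrices (encoded as `Fin n → V3`). -/
def mdot {n : ℕ} (A B : Fin n → V3) : ℝ := ∑ i, ∑ j, A i j * B i j

/-- Classical curl of a vector field on `ℝ³` (cyclic formula). -/
def vcurl (w : V3 → V3) (x : V3) : V3 :=
  fun k => pd (k + 1) (fun y => w y (k + 2)) x - pd (k + 2) (fun y => w y (k + 1)) x

/-- Row-wise classical Curl of an `n × 3` tensor field. -/
def mCurl {n : ℕ} (Q : V3 → Fin n → V3) (x : V3) : Fin n → V3 :=
  fun i => vcurl (fun y => Q y i) x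

/-- The open cube `(-r,r)³`. -/
def Cube (r : ℝ) : Set V3 := {x | ∀ i, |x i| < r}

/-- `C_c^∞(Ω)` test functions (with values in a normed space). -/
def IsTest {E : Type} [NormedAddCommGroup E] [NormedSpace ℝ E]
    (Ω : Set V3) (ψ : V3 → E) : Prop :=
  ContDiff ℝ (⊤ : ℕ∞) ψ ∧ HasCompactSupport ψ ∧ tsupport ψ ⊆ Ω

/-- `g` is the weak `j`-th partial derivative of `f` on `Ω`. -/
def HasWeakPD (Ω : Set V3) (f g : V3 → ℝ) (j : Fin 3) : Prop :=
  ∀ ψ : V3 → ℝ, IsTest Ω ψ →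
    ∫ x in Ω, g x * ψ x = - ∫ x in Ω, f x * pd j ψ x

/-- Membership in `L²(Ω)`. -/
def MemL2 {E : Type} [NormedAddCommGroup E] (Ω : Set V3) (f : V3 → E) : Prop :=
  MemLp f 2 (volume.restrict Ω)

/-- Membership in `L²_loc(Ω)`. -/
def MemL2loc {E : Type} [NormedAddCommGroup E] (Ω : Set V3) (f : V3 → E) : Prop :=
  ∀ Ω' : Set V3, IsOpen Ω' → IsCompact (closure Ω') → closure Ω' ⊆ Ω → MemL2 Ω' f

/-- The `L²(Ω)` norm. -/
def L2norm {E : Type} [NormedAddCommGroup E] (Ω : Set V3) (f : V3 → E) : ℝ :=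
  (eLpNorm f 2 (volume.restrict Ω)).toReal

/-- `G` is the weak Jacobian of `u` on `Ω`. -/
def HasWeakJac {m : ℕ} (Ω : Set V3) (u : V3 → Fin m → ℝ) (G : V3 → Fin m → V3) : Prop :=
  ∀ i j, HasWeakPD Ω (fun x => u x i) (fun x => G x i j) j

/-- `u ∈ H¹(Ω, ℝ^m)` with weak Jacobian `G`. -/
def MemH1 {m : ℕ} (Ω : Set V3) (u : V3 → Fin m → ℝ) (G : V3 → Fin m → V3) : Prop :=
  MemL2 Ω u ∧ MemL2 Ω G ∧ HasWeakJac Ω u G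

/-- `G` is the weak (row-wise) Curl of `Q` on `Ω`. -/
def HasWeakCurl {n : ℕ} (Ω : Set V3) (Q G : V3 → Fin n → V3) : Prop :=
  ∀ ψ : V3 → Fin n → V3, IsTest Ω ψ →
    ∫ x in Ω, mdot (G x) (ψ x) = ∫ x in Ω, mdot (Q x) (mCurl ψ x)

/-- `Q ∈ H(Curl;Ω,ℝ^{n×3})` with weak Curl `G`. -/
def MemHCurl {n : ℕ} (Ω : Set V3) (Q G : V3 → Fin n → V3) : Prop :=
  MemL2 Ω Q ∧ MemL2 Ω G ∧ HasWeakCurl Ω Q G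

/-- The `H¹(Ω)` norm of `u` with weak Jacobian `G`. -/
def H1norm {m : ℕ} (Ω : Set V3) (u : V3 → Fin m → ℝ) (G : V3 → Fin m → V3) : ℝ :=
  Real.sqrt (L2norm Ω u ^ 2 + L2norm Ω G ^ 2)

/-- The `H(Curl;Ω)` norm of `Q` with weak Curl `G`. -/
def HCurlNorm {n : ℕ} (Ω : Set V3) (Q G : V3 → Fin n → V3) : ℝ :=
  Real.sqrt (L2norm Ω Q ^ 2 + L2norm Ω G ^ 2)

/-- `M ∈ H¹_loc(Ω, ℝ^{n×3})`: on every `Ω' ⋐ Ω` there is a weak Jacobian in `L²(Ω')`. -/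
def MemH1locMat {n : ℕ} (Ω : Set V3) (M : V3 → Fin n → V3) : Prop :=
  ∀ Ω' : Set V3, IsOpen Ω' → IsCompact (closure Ω') → closure Ω' ⊆ Ω →
    ∃ G : V3 → Fin n → Fin 3 → V3, MemL2 Ω' G ∧
      ∀ i j k, HasWeakPD Ω' (fun x => M x i j) (fun x => G x i j k) k

/-- Inner variation `T_h(x) = x + φ(x) h`. -/
def Th (φ : V3 → ℝ) (h : V3) (x : V3) : V3 := x + φ x • h

/-- The Jacobian matrix `∇T_h(x) = I + h ⊗ ∇φ(x)`. -/
def DTh (φ : V3 → ℝ) (h : V3) (x : V3) : Matrix (Fin 3) (Fin 3) ℝ :=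
  1 + Matrix.vecMulVec h (gradv φ x)

/-- Product of an `n × 3` matrix (as `Fin n → V3`) with a `3 × 3` matrix. -/
def mmulR {n : ℕ} (A : Fin n → V3) (B : Matrix (Fin 3) (Fin 3) ℝ) : Fin n → V3 :=
  fun i j => ∑ k, A i k * B k j

/-- The Piola-type transform `𝒯_h(Q)(x) = Q(T_h(x)) ∇T_h(x)`. -/
def piolaT {n : ℕ} (φ : V3 → ℝ) (h : V3) (Q : V3 → Fin n → V3) : V3 → Fin n → V3 :=
  fun x => mmulR (Q (Th φ h x)) (DTh φ h x)

/-- The transformation rule for the Curl: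
`x ↦ det ∇T_h(x) · G(T_h(x)) · (∇T_h(x))^{-T}`. -/
def curlTrans {n : ℕ} (φ : V3 → ℝ) (h : V3) (G : V3 → Fin n → V3) : V3 → Fin n → V3 :=
  fun x => (DTh φ h x).det • mmulR (G (Th φ h x)) ((DTh φ h x)⁻¹.transpose)

/-- `φ` is a cut-off function: smooth, compactly supported in `C_ρ`, `≡ 1` on `C_{ρ/2}`. -/
def CutOff (ρ : ℝ) (φ : V3 → ℝ) : Prop :=
  ContDiff ℝ (⊤ : ℕ∞) φ ∧ HasCompactSupport φ ∧ tsupport φ ⊆ Cube ρ ∧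
    ∀ x ∈ Cube (ρ / 2), φ x = 1

/-- For all `|h| ≤ h₀`, `T_h` is a (smooth) diffeomorphism of the cube `C_r` onto itself,
with (global) inverse `S h`; its Jacobian determinant never vanishes. -/
def IsDiffeoFamily (r : ℝ) (φ : V3 → ℝ) (h₀ : ℝ) (S : V3 → V3 → V3) : Prop :=
  ∀ h : V3, ‖h‖ ≤ h₀ →
    ContDiff ℝ (⊤ : ℕ∞) (S h) ∧ (∀ x, S h (Th φ h x) = x) ∧ (∀ x, Th φ h (S h x) = x) ∧
    MapsTo (Th φ h) (Cube r) (Cube r) ∧ MapsTo (S h) (Cube r) (Cube r) ∧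
    ∀ x, (DTh φ h x).det ≠ 0

/-- Classical Jacobian matrix `∇Φ(x)` of a map `Φ : ℝ³ → ℝ³` (via `fderiv`). -/
def jacM (Φ : V3 → V3) (x : V3) : Matrix (Fin 3) (Fin 3) ℝ :=
  Matrix.of fun i j => fderiv ℝ Φ x (e3 j) i


private lemma piola_v_eq_sum (v : V3) : v = ∑ p, v p • e3 p := by
  funext j
  simp [e3, Finset.sum_apply, Pi.single_apply]

private lemma piola_fderiv_eval (f : V3 → ℝ) (x : V3) (v : V3) :
    fderiv ℝ f x v = ∑ p, v p * pd p f x := by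
  conv_lhs => rw [piola_v_eq_sum v]
  rw [map_sum]
  simp [pd]

private lemma piola_pd_comp (f : V3 → ℝ) (Φ : V3 → V3) (x : V3) (j : Fin 3)
    (hf : DifferentiableAt ℝ f (Φ x)) (hΦ : DifferentiableAt ℝ Φ x) :
    pd j (fun y => f (Φ y)) x = ∑ p, pd p f (Φ x) * jacM Φ x p j := by
  have hc : fderiv ℝ (f ∘ Φ) x = (fderiv ℝ f (Φ x)).comp (fderiv ℝ Φ x) :=
    fderiv_comp x hf hΦ
  have h1 : pd j (fun y => f (Φ y)) x = fderiv ℝ f (Φ x) (fderiv ℝ Φ x (e3 j)) := by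
    show fderiv ℝ (f ∘ Φ) x (e3 j) = _
    rw [hc]; rfl
  rw [h1, piola_fderiv_eval f]
  exact Finset.sum_congr rfl fun p _ => by rw [mul_comm]; rfl

private lemma piola_pd_mul (f g : V3 → ℝ) (x : V3) (j : Fin 3) (hf : DifferentiableAt ℝ f x)
    (hg : DifferentiableAt ℝ g x) :
    pd j (fun y => f y * g y) x = pd j f x * g x + f x * pd j g x := by
  unfold pd
  rw [fderiv_fun_mul hf hg]
  simp only [ContinuousLinearMap.add_apply, ContinuousLinearMap.smul_apply, smul_eq_mul]
  ring

private lemma piola_pd_sum {ι : Type} (s : Finset ι) (f : ι → V3 → ℝ) (x : V3) (j : Fin 3)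
    (hf : ∀ m ∈ s, DifferentiableAt ℝ (f m) x) :
    pd j (fun y => ∑ m ∈ s, f m y) x = ∑ m ∈ s, pd j (f m) x := by
  unfold pd
  rw [fderiv_fun_sum hf]
  simp

private lemma piola_pd_jac_symm (Φ : V3 → V3) (x : V3) (hΦ : ContDiffAt ℝ 2 Φ x)
    (m a b : Fin 3) :
    pd a (fun y => jacM Φ y m b) x = pd b (fun y => jacM Φ y m a) x := by
  have hF : DifferentiableAt ℝ (fderiv ℝ Φ) x :=
    (hΦ.fderiv_right (m := 1) (by norm_num)).differentiableAt (by norm_num)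
  have key : ∀ b a : Fin 3, pd a (fun y => jacM Φ y m b) x
      = fderiv ℝ (fderiv ℝ Φ) x (e3 a) (e3 b) m := by
    intro b a
    have h1 : (fun y => jacM Φ y m b)
        = (ContinuousLinearMap.proj m : V3 →L[ℝ] ℝ) ∘ (fun y => fderiv ℝ Φ y (e3 b)) := rfl
    unfold pd
    rw [h1, fderiv_comp x (ContinuousLinearMap.proj m).differentiableAt
      (hF.clm_apply (differentiableAt_const _)), ContinuousLinearMap.fderiv]
    simp only [ContinuousLinearMap.coe_comp', Function.comp_apply]
    have h2 : fderiv ℝ (fun y => fderiv ℝ Φ y (e3 b)) x (e3 a)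
        = fderiv ℝ (fderiv ℝ Φ) x (e3 a) (e3 b) := by
      rw [fderiv_clm_apply hF (differentiableAt_const _)]
      simp
    rw [h2]; rfl
  rw [key, key]
  rw [hΦ.isSymmSndFDerivAt (by norm_num) (e3 a) (e3 b)]

/-- **Transformation of the Curl under the covariant Piola transform** (formula (A.3)):
for a `C²` diffeomorphism `Φ : Ω → Ω̃` and a `C¹` tensor field `A : Ω̃ → ℝ^{k×3}`,
the covariant Piola transform `𝒬_Φ(A)(x) = A(Φ(x))∇Φ(x)` satisfies
`Curl(𝒬_Φ(A))(x) = det∇Φ(x) · (Curl A)(Φ(x)) · (∇Φ(x))^{-T}` on `Ω`. -/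
theorem curl_covariant_piola
    (Ω Ω' : Set V3) (hΩ : IsOpen Ω) (hΩ' : IsOpen Ω')
    (Φ : V3 → V3) (hΦ : ContDiffOn ℝ 2 Φ Ω) (hbij : BijOn Φ Ω Ω')
    (hinv : ∀ x ∈ Ω, (jacM Φ x).det ≠ 0)
    (k : ℕ) (A : V3 → Fin k → V3) (hA : ContDiffOn ℝ 1 A Ω') :
    ∀ x ∈ Ω,
      mCurl (fun y => mmulR (A (Φ y)) (jacM Φ y)) x
        = (jacM Φ x).det • mmulR (mCurl A (Φ x)) ((jacM Φ x)⁻¹.transpose) := by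

  intro x hx
  have hΦx : ContDiffAt ℝ 2 Φ x := hΦ.contDiffAt (hΩ.mem_nhds hx)
  have hΦd : DifferentiableAt ℝ Φ x := hΦx.differentiableAt (by norm_num)
  have hAx : ContDiffAt ℝ 1 A (Φ x) := hA.contDiffAt (hΩ'.mem_nhds (hbij.mapsTo hx))
  have hAd : DifferentiableAt ℝ A (Φ x) := hAx.differentiableAt one_ne_zero
  have hdet : (jacM Φ x).det ≠ 0 := hinv x hx
  have hF : DifferentiableAt ℝ (fderiv ℝ Φ) x :=
    (hΦx.fderiv_right (m := 1) (by norm_num)).differentiableAt (by norm_num)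
  have hgd : ∀ (m b : Fin 3), DifferentiableAt ℝ (fun y => jacM Φ y m b) x := by
    intro m b
    exact differentiableAt_pi.1 (hF.clm_apply (differentiableAt_const (e3 b))) m
  funext i c
  have hfd : ∀ m : Fin 3, DifferentiableAt ℝ (fun z => A z i m) (Φ x) := fun m =>
    differentiableAt_pi.1 (differentiableAt_pi.1 hAd i) m
  have hcompd : ∀ m : Fin 3, DifferentiableAt ℝ (fun y => A (Φ y) i m) x := fun m =>
    (hfd m).comp x hΦd
  have main : ∀ a b : Fin 3,
      pd a (fun y => ∑ m, A (Φ y) i m * jacM Φ y m b) x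
        = (∑ m, ∑ p, pd p (fun z => A z i m) (Φ x) * (jacM Φ x p a * jacM Φ x m b))
          + ∑ m, A (Φ x) i m * pd a (fun y => jacM Φ y m b) x := by
    intro a b
    rw [piola_pd_sum Finset.univ (fun m => fun y => A (Φ y) i m * jacM Φ y m b) x a
      (fun m _ => (hcompd m).mul (hgd m b))]
    rw [← Finset.sum_add_distrib]
    refine Finset.sum_congr rfl fun m _ => ?_
    rw [piola_pd_mul _ _ _ _ (hcompd m) (hgd m b),
      piola_pd_comp (fun z => A z i m) Φ x a (hfd m) hΦd, Finset.sum_mul]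
    congr 1
    exact Finset.sum_congr rfl fun p _ => by ring
  have lhs_eq : mCurl (fun y => mmulR (A (Φ y)) (jacM Φ y)) x i c
      = ∑ m, ∑ p, pd p (fun z => A z i m) (Φ x) *
          (jacM Φ x p (c+1) * jacM Φ x m (c+2) - jacM Φ x p (c+2) * jacM Φ x m (c+1)) := by
    show pd (c+1) (fun y => mmulR (A (Φ y)) (jacM Φ y) i (c+2)) x
        - pd (c+2) (fun y => mmulR (A (Φ y)) (jacM Φ y) i (c+1)) x = _
    simp only [mmulR]
    rw [main (c+1) (c+2), main (c+2) (c+1)]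
    have hcancel : (∑ m, A (Φ x) i m * pd (c+1) (fun y => jacM Φ y m (c+2)) x)
        = ∑ m, A (Φ x) i m * pd (c+2) (fun y => jacM Φ y m (c+1)) x := by
      refine Finset.sum_congr rfl fun m _ => ?_
      rw [piola_pd_jac_symm Φ x hΦx m (c+1) (c+2)]
    rw [hcancel]
    ring_nf
    rw [← Finset.sum_sub_distrib]
    refine Finset.sum_congr rfl fun m _ => ?_
    rw [← Finset.sum_sub_distrib]
  rw [lhs_eq]
  -- now the RHS
  have hinv_entry : ∀ cc j : Fin 3, (jacM Φ x)⁻¹ cc j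
      = ((jacM Φ x).det)⁻¹ * (jacM Φ x).adjugate cc j := by
    intro cc j
    rw [Matrix.inv_def, Ring.inverse_eq_inv']
    simp
  show _ = ((jacM Φ x).det • mmulR (mCurl A (Φ x)) ((jacM Φ x)⁻¹.transpose)) i c
  simp only [Pi.smul_apply, smul_eq_mul, mmulR, Matrix.transpose_apply, mCurl, vcurl,
    Finset.mul_sum]
  have hterm : ∀ j : Fin 3, (jacM Φ x).det *
      ((pd (j+1) (fun y => A y i (j+2)) (Φ x) - pd (j+2) (fun y => A y i (j+1)) (Φ x))
        * (jacM Φ x)⁻¹ c j)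
      = (pd (j+1) (fun y => A y i (j+2)) (Φ x) - pd (j+2) (fun y => A y i (j+1)) (Φ x))
        * (jacM Φ x).adjugate c j := by
    intro j
    rw [hinv_entry c j]
    field_simp
  rw [Finset.sum_congr rfl fun j _ => hterm j]
  rw [Matrix.adjugate_fin_three]
  set J := jacM Φ x with hJ
  set D : Fin 3 → Fin 3 → ℝ := fun p m => pd p (fun z => A z i m) (Φ x) with hD
  have hDA : ∀ p m : Fin 3, pd p (fun y => A y i m) (Φ x) = D p m := fun _ _ => rfl
  simp only [hDA]
  fin_cases c <;>
    · simp only [show ((0:Fin 3)+1 : Fin 3) = 1 from rfl]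
      simp [Fin.sum_univ_three, Fin.isValue]
      ring

end
end

section
/- Let Ω, Ω̃ ⊂ ℝ^n be open, let Φ : Ω → Ω̃ be a C² diffeomorphism, let k ∈ ℕ, and let A : Ω̃ → ℝ^{k×n} be a C¹ tensor field. Define the contravariant Piola transform 𝒫_Φ(A) : Ω → ℝ^{k×n} by 𝒫_Φ(A)(x) := det∇Φ(x) · A(Φ(x)) · (∇Φ(x))^{-T}. Then for every x ∈ Ω: Div(𝒫_Φ(A))(x) = det∇Φ(x) · (Div A)(Φ(x)). -/
open Set

noncomputable section

/-- Partial derivative `∂_j f (x)` of a scalar function on `ℝ^n` (via `fderiv`). -/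
def pdn {n : ℕ} (j : Fin n) (f : (Fin n → ℝ) → ℝ) (x : Fin n → ℝ) : ℝ :=
  fderiv ℝ f x (Pi.single j 1)

/-- Classical Jacobian matrix `∇Φ(x)` of a map `Φ : ℝ^n → ℝ^n` (via `fderiv`). -/
def jacN {n : ℕ} (Φ : (Fin n → ℝ) → (Fin n → ℝ)) (x : Fin n → ℝ) :
    Matrix (Fin n) (Fin n) ℝ :=
  Matrix.of fun i j => fderiv ℝ Φ x (Pi.single j 1) i

variable {E : Type*} [NormedAddCommGroup E] [NormedSpace ℝ E]

/-- Derivative of the determinant of a matrix-valued function. -/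
lemma det_hasFDerivAt {m : ℕ} {M : E → Matrix (Fin m) (Fin m) ℝ}
    {M' : Fin m → Fin m → (E →L[ℝ] ℝ)} {x : E}
    (h : ∀ p q, HasFDerivAt (fun y => M y p q) (M' p q) x) :
    HasFDerivAt (fun y => (M y).det)
      (∑ σ : Equiv.Perm (Fin m), ((Equiv.Perm.sign σ : ℤ) : ℝ) •
        ∑ i : Fin m, (∏ j ∈ Finset.univ.erase i, M x (σ j) j) • M' (σ i) i) x := by
  have hdet : (fun y => (M y).det)
      = fun y => ∑ σ : Equiv.Perm (Fin m), ((Equiv.Perm.sign σ : ℤ) : ℝ) * ∏ i, M y (σ i) i := by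
    funext y; rw [Matrix.det_apply']
  rw [hdet]
  apply HasFDerivAt.fun_sum
  intro σ _
  exact (HasFDerivAt.finset_prod (fun i _ => h (σ i) i)).const_mul _

lemma det_deriv_apply {m : ℕ} (M : Matrix (Fin m) (Fin m) ℝ)
    (M' : Fin m → Fin m → (E →L[ℝ] ℝ)) (v : E) :
    (∑ σ : Equiv.Perm (Fin m), ((Equiv.Perm.sign σ : ℤ) : ℝ) •
        ∑ i : Fin m, (∏ j ∈ Finset.univ.erase i, M (σ j) j) • M' (σ i) i) v
      = ∑ p : Fin m, (M.updateRow p (fun q => M' p q v)).det := by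
  have hR : ∀ p : Fin m, (M.updateRow p (fun q => M' p q v)).det
      = ∑ σ : Equiv.Perm (Fin m), ((Equiv.Perm.sign σ : ℤ) : ℝ) *
          ∏ i, (M.updateRow p (fun q => M' p q v)) (σ i) i :=
    fun p => Matrix.det_apply' _
  rw [Finset.sum_congr rfl (fun p _ => hR p), Finset.sum_comm]
  rw [ContinuousLinearMap.sum_apply]
  refine Finset.sum_congr rfl fun σ _ => ?_
  rw [ContinuousLinearMap.smul_apply, ContinuousLinearMap.sum_apply, ← Finset.mul_sum]
  rw [smul_eq_mul]
  congr 1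
  -- now : ∑ i, ((∏ j ∈ erase i, M (σ j) j) • M' (σ i) i) v = ∑ p, ∏ i, updateRow ...
  rw [← Equiv.sum_comp σ (fun p => ∏ i, (M.updateRow p (fun q => M' p q v)) (σ i) i)]
  refine Finset.sum_congr rfl fun i₀ _ => ?_
  rw [ContinuousLinearMap.smul_apply, smul_eq_mul]
  rw [← Finset.mul_prod_erase Finset.univ _ (Finset.mem_univ i₀)]
  have h1 : (M.updateRow (σ i₀) (fun q => M' (σ i₀) q v)) (σ i₀) i₀ = M' (σ i₀) i₀ v := by
    rw [Matrix.updateRow_self]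
  have h2 : ∀ i ∈ Finset.univ.erase i₀,
      (M.updateRow (σ i₀) (fun q => M' (σ i₀) q v)) (σ i) i = M (σ i) i := by
    intro i hi
    have : σ i ≠ σ i₀ := fun hc => (Finset.mem_erase.1 hi).1 (σ.injective hc)
    rw [Matrix.updateRow_ne this]
  rw [h1, Finset.prod_congr rfl h2, mul_comm]

lemma fderiv_det_apply {m : ℕ} {M : E → Matrix (Fin m) (Fin m) ℝ}
    {M' : Fin m → Fin m → (E →L[ℝ] ℝ)} {x : E}
    (h : ∀ p q, HasFDerivAt (fun y => M y p q) (M' p q) x) (v : E) :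
    fderiv ℝ (fun y => (M y).det) x v
      = ∑ p : Fin m, ((M x).updateRow p (fun q => M' p q v)).det := by
  rw [(det_hasFDerivAt h).fderiv]; exact det_deriv_apply _ _ _

/-- Multilinearity of det in a row. -/
lemma det_updateRow_expand {m : ℕ} (N : Matrix (Fin m) (Fin m) ℝ) (p : Fin m) (v : Fin m → ℝ) :
    (N.updateRow p v).det = ∑ q : Fin m, v q * (N.updateRow p (Pi.single q 1)).det := by
  have key : ∀ w : Fin m → ℝ, (N.updateRow p w).det = Matrix.cramer N.transpose w p := by
    intro w
    rw [Matrix.cramer_apply, Matrix.updateCol_transpose, Matrix.det_transpose]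
  rw [key]
  have hv : v = ∑ q : Fin m, v q • (Pi.single q 1 : Fin m → ℝ) := by
    funext q'
    simp [Pi.single_apply]
  rw [hv]
  rw [map_sum]
  simp only [LinearMap.map_smul]
  rw [Finset.sum_apply]
  refine Finset.sum_congr rfl fun q _ => ?_
  rw [Pi.smul_apply, smul_eq_mul, key]
  rw [← hv]

lemma det_double_update_swap {m : ℕ} (N : Matrix (Fin m) (Fin m) ℝ) {l p : Fin m} (hlp : l ≠ p)
    (u w : Fin m → ℝ) :
    ((N.updateRow l u).updateRow p w).det = - ((N.updateRow l w).updateRow p u).det := by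
  have hswap : ((N.updateRow l u).updateRow p w).submatrix (Equiv.swap l p) id
      = (N.updateRow l w).updateRow p u := by
    ext a b
    rcases eq_or_ne a l with rfl | hal
    · simp [Matrix.submatrix_apply, Equiv.swap_apply_left, Matrix.updateRow_self,
        Matrix.updateRow_ne hlp]
    · rcases eq_or_ne a p with rfl | hap
      · simp [Matrix.submatrix_apply, Equiv.swap_apply_right, Matrix.updateRow_self,
          Matrix.updateRow_ne hlp.symm, Matrix.updateRow_ne hlp]
      · simp [Matrix.submatrix_apply, Equiv.swap_apply_of_ne_of_ne hal hap,
          Matrix.updateRow_ne hal, Matrix.updateRow_ne hap]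
  have h1 := Matrix.det_permute (Equiv.swap l p) ((N.updateRow l u).updateRow p w)
  rw [hswap, Equiv.Perm.sign_swap hlp] at h1
  norm_num at h1
  linarith [h1]

lemma sum_symm_antisymm_zero {m : ℕ} (S D : Fin m → Fin m → ℝ)
    (hS : ∀ a b, S a b = S b a) (hD : ∀ a b, D a b = - D b a) :
    ∑ a : Fin m, ∑ b : Fin m, S a b * D a b = 0 := by
  have h : (∑ a : Fin m, ∑ b : Fin m, S a b * D a b)
      = - ∑ a : Fin m, ∑ b : Fin m, S a b * D a b := by
    conv_lhs => rw [Finset.sum_comm]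
    calc ∑ b : Fin m, ∑ a : Fin m, S a b * D a b
        = ∑ b : Fin m, ∑ a : Fin m, -(S b a * D b a) := by
          refine Finset.sum_congr rfl fun b _ => Finset.sum_congr rfl fun a _ => ?_
          rw [hS b a, hD a b]; ring
      _ = - ∑ a : Fin m, ∑ b : Fin m, S a b * D a b := by
          simp [Finset.sum_neg_distrib]
  linarith

lemma clm_expand {m : ℕ} (T : (Fin m → ℝ) →L[ℝ] ℝ) (w : Fin m → ℝ) :
    T w = ∑ r : Fin m, w r * T (Pi.single r 1) := by
  have hw : w = ∑ r : Fin m, w r • (Pi.single r 1 : Fin m → ℝ) := by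
    funext q'; simp [Pi.single_apply]
  conv_lhs => rw [hw]
  rw [map_sum]
  refine Finset.sum_congr rfl fun r _ => ?_
  rw [T.map_smul, smul_eq_mul]

set_option maxHeartbeats 1600000 in
/-- **Divergence under the contravariant Piola transform** (formula (A.2)):
for a `C²` diffeomorphism `Φ : Ω → Ω̃` and a `C¹` tensor field `A : Ω̃ → ℝ^{k×n}`, the
contravariant Piola transform `𝒫_Φ(A)(x) = det∇Φ(x) · A(Φ(x)) · (∇Φ(x))^{-T}` satisfies
`Div(𝒫_Φ(A))(x) = det∇Φ(x) · (Div A)(Φ(x))` on `Ω` (row-wise divergence). -/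
theorem div_contravariant_piola
    (n k : ℕ) (Ω Ω' : Set (Fin n → ℝ)) (hΩ : IsOpen Ω) (hΩ' : IsOpen Ω')
    (Φ : (Fin n → ℝ) → (Fin n → ℝ)) (hΦ : ContDiffOn ℝ 2 Φ Ω)
    (hbij : BijOn Φ Ω Ω') (hinv : ∀ x ∈ Ω, (jacN Φ x).det ≠ 0)
    (A : (Fin n → ℝ) → Fin k → Fin n → ℝ) (hA : ContDiffOn ℝ 1 A Ω') :
    ∀ x ∈ Ω, ∀ i : Fin k,
      ∑ j : Fin n,
        pdn j (fun y =>
          (jacN Φ y).det * ∑ l : Fin n, A (Φ y) i l * ((jacN Φ y)⁻¹.transpose) l j) x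
        = (jacN Φ x).det * ∑ j : Fin n, pdn j (fun y => A y i j) (Φ x) := by
  intro x hx i
  have hxmem : Ω ∈ nhds x := hΩ.mem_nhds hx
  have hΦx : ContDiffAt ℝ 2 Φ x := hΦ.contDiffAt hxmem
  have hΦdx : DifferentiableAt ℝ Φ x := hΦx.differentiableAt (by norm_num)
  have hf' : ContDiffOn ℝ 1 (fderiv ℝ Φ) Ω := hΦ.fderiv_of_isOpen hΩ (by norm_num)
  have hdΦ : DifferentiableAt ℝ (fderiv ℝ Φ) x :=
    (hf'.contDiffAt hxmem).differentiableAt (by norm_num)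
  -- derivatives of the Jacobian entries
  set J' : Fin n → Fin n → ((Fin n → ℝ) →L[ℝ] ℝ) := fun p q =>
    ((ContinuousLinearMap.proj p).comp
      (ContinuousLinearMap.apply ℝ (Fin n → ℝ) (Pi.single q 1))).comp
      (fderiv ℝ (fderiv ℝ Φ) x) with hJ'def
  have hJf : ∀ p q, HasFDerivAt (fun y => jacN Φ y p q) (J' p q) x := by
    intro p q
    have heq : (fun y => jacN Φ y p q)
        = fun y => ((ContinuousLinearMap.proj p).comp
            (ContinuousLinearMap.apply ℝ (Fin n → ℝ) (Pi.single q 1))) (fderiv ℝ Φ y) := rfl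
    rw [heq]
    exact (ContinuousLinearMap.hasFDerivAt _).comp x hdΦ.hasFDerivAt
  -- symmetry of second derivatives
  have hsym : ∀ v w, fderiv ℝ (fderiv ℝ Φ) x v w = fderiv ℝ (fderiv ℝ Φ) x w v :=
    hΦx.isSymmSndFDerivAt (by simp [minSmoothness_of_isRCLikeNormedField])
  have hS : ∀ p q r, J' p q (Pi.single r 1) = J' p r (Pi.single q 1) := by
    intro p q r
    have h1 : J' p q (Pi.single r 1)
        = fderiv ℝ (fderiv ℝ Φ) x (Pi.single r 1) (Pi.single q 1) p := rfl
    have h2 : J' p r (Pi.single q 1)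
        = fderiv ℝ (fderiv ℝ Φ) x (Pi.single q 1) (Pi.single r 1) p := rfl
    rw [h1, h2, hsym]
  -- differentiability of A components at Φ x
  have hA0 : DifferentiableAt ℝ A (Φ x) :=
    (hA.contDiffAt (hΩ'.mem_nhds (hbij.mapsTo hx))).differentiableAt (by norm_num)
  have hAx : ∀ l : Fin n, DifferentiableAt ℝ (fun z => A z i l) (Φ x) := by
    intro l
    have h1 : DifferentiableAt ℝ (fun z => A z i) (Φ x) := differentiableAt_pi.mp hA0 i
    exact differentiableAt_pi.mp h1 l
  set α' : Fin n → ((Fin n → ℝ) →L[ℝ] ℝ) := fun l =>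
    (fderiv ℝ (fun z => A z i l) (Φ x)).comp (fderiv ℝ Φ x) with hα'def
  have hα : ∀ l, HasFDerivAt (fun y => A (Φ y) i l) (α' l) x :=
    fun l => ((hAx l).hasFDerivAt).comp x hΦdx.hasFDerivAt
  have hαval : ∀ l j, α' l (Pi.single j 1)
      = ∑ m' : Fin n, jacN Φ x m' j * pdn m' (fun z => A z i l) (Φ x) := by
    intro l j
    have h0 : α' l (Pi.single j 1)
        = (fderiv ℝ (fun z => A z i l) (Φ x)) (fderiv ℝ Φ x (Pi.single j 1)) := rfl
    rw [h0, clm_expand]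
    exact Finset.sum_congr rfl fun r _ => rfl
  -- the adjugate-entry functions and their derivatives
  have hB : ∀ j l : Fin n, ∃ D : (Fin n → ℝ) →L[ℝ] ℝ,
      HasFDerivAt (fun y => ((jacN Φ y).updateRow l (Pi.single j 1)).det) D x ∧
      ∀ v, D v = ∑ p : Fin n, (((jacN Φ x).updateRow l (Pi.single j 1)).updateRow p
        (fun q => (if p = l then (0 : (Fin n → ℝ) →L[ℝ] ℝ) else J' p q) v)).det := by
    intro j l
    have hMent : ∀ p q, HasFDerivAt (fun y => ((jacN Φ y).updateRow l (Pi.single j 1)) p q)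
        ((if p = l then (0 : (Fin n → ℝ) →L[ℝ] ℝ) else J' p q)) x := by
      intro p q
      rcases eq_or_ne p l with rfl | hpl
      · have heq : (fun y => ((jacN Φ y).updateRow p (Pi.single j 1)) p q)
            = fun _ => (Pi.single j 1 : Fin n → ℝ) q := by
          funext y; rw [Matrix.updateRow_self]
        rw [heq, if_pos rfl]
        exact hasFDerivAt_const _ _
      · have heq : (fun y => ((jacN Φ y).updateRow l (Pi.single j 1)) p q)
            = fun y => jacN Φ y p q := by
          funext y; rw [Matrix.updateRow_ne hpl]
        rw [heq, if_neg hpl]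
        exact hJf p q
    refine ⟨_, det_hasFDerivAt (M := fun y => (jacN Φ y).updateRow l (Pi.single j 1))
      (M' := fun p q => if p = l then (0 : (Fin n → ℝ) →L[ℝ] ℝ) else J' p q) hMent,
      fun v => det_deriv_apply ((jacN Φ x).updateRow l (Pi.single j 1))
        (fun p q => if p = l then (0 : (Fin n → ℝ) →L[ℝ] ℝ) else J' p q) v⟩
  choose Dd hDd hDval using hB
  -- rewrite the LHS using local equality with the adjugate form
  have hLHS : ∀ j : Fin n,
      pdn j (fun y =>
        (jacN Φ y).det * ∑ l : Fin n, A (Φ y) i l * ((jacN Φ y)⁻¹.transpose) l j) x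
      = ∑ l : Fin n, (A (Φ x) i l * Dd j l (Pi.single j 1)
          + ((jacN Φ x).updateRow l (Pi.single j 1)).det * α' l (Pi.single j 1)) := by
    intro j
    have hev : (fun y =>
          (jacN Φ y).det * ∑ l : Fin n, A (Φ y) i l * ((jacN Φ y)⁻¹.transpose) l j)
        =ᶠ[nhds x] (fun y =>
          ∑ l : Fin n, A (Φ y) i l * ((jacN Φ y).updateRow l (Pi.single j 1)).det) := by
      filter_upwards [hxmem] with y hy
      have hdet := hinv y hy
      have hinvJ : (jacN Φ y)⁻¹ = ((jacN Φ y).det)⁻¹ • (jacN Φ y).adjugate := by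
        rw [Matrix.inv_def, Ring.inverse_eq_inv']
      rw [Finset.mul_sum]
      refine Finset.sum_congr rfl fun l _ => ?_
      have hBeq : ((jacN Φ y).updateRow l (Pi.single j 1)).det = (jacN Φ y).adjugate j l :=
        (Matrix.adjugate_apply _ _ _).symm
      rw [hBeq, Matrix.transpose_apply, hinvJ, Matrix.smul_apply, smul_eq_mul]
      field_simp
    have hG : HasFDerivAt (fun y =>
          ∑ l : Fin n, A (Φ y) i l * ((jacN Φ y).updateRow l (Pi.single j 1)).det)
        (∑ l : Fin n, (A (Φ x) i l • Dd j l
          + ((jacN Φ x).updateRow l (Pi.single j 1)).det • α' l)) x :=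
      HasFDerivAt.fun_sum fun l _ => (hα l).mul (hDd j l)
    unfold pdn
    rw [hev.fderiv_eq, hG.fderiv, ContinuousLinearMap.sum_apply]
    refine Finset.sum_congr rfl fun l _ => ?_
    rw [ContinuousLinearMap.add_apply, ContinuousLinearMap.smul_apply,
      ContinuousLinearMap.smul_apply, smul_eq_mul, smul_eq_mul]
  rw [Finset.sum_congr rfl fun j _ => hLHS j]
  rw [Finset.sum_congr rfl fun j (_ : j ∈ Finset.univ) => Finset.sum_add_distrib]
  rw [Finset.sum_add_distrib]
  -- the Piola identity: the divergence of each adjugate column vanishes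
  have hPiola : ∀ l : Fin n, ∑ j : Fin n, Dd j l (Pi.single j 1) = 0 := by
    intro l
    have hstep1 : ∀ j : Fin n, Dd j l (Pi.single j 1)
        = ∑ p ∈ Finset.univ.erase l, (((jacN Φ x).updateRow l (Pi.single j 1)).updateRow p
            (fun q => J' p q (Pi.single j 1))).det := by
      intro j
      rw [hDval j l (Pi.single j 1),
        ← Finset.add_sum_erase Finset.univ _ (Finset.mem_univ l)]
      have hfl : (((jacN Φ x).updateRow l (Pi.single j 1)).updateRow l
          (fun q => (if l = l then (0 : (Fin n → ℝ) →L[ℝ] ℝ) else J' l q)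
            (Pi.single j 1))).det = 0 := by
        apply Matrix.det_eq_zero_of_row_eq_zero l
        intro q
        rw [Matrix.updateRow_self]
        simp
      rw [hfl, zero_add]
      refine Finset.sum_congr rfl fun p hp => ?_
      have hpl : p ≠ l := (Finset.mem_erase.1 hp).1
      simp only [if_neg hpl]
    rw [Finset.sum_congr rfl fun j (_ : j ∈ Finset.univ) => hstep1 j, Finset.sum_comm]
    refine Finset.sum_eq_zero fun p hp => ?_
    have hpl : p ≠ l := (Finset.mem_erase.1 hp).1
    have hlp : l ≠ p := hpl.symm
    have hstep2 : ∀ j : Fin n, (((jacN Φ x).updateRow l (Pi.single j 1)).updateRow p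
          (fun q => J' p q (Pi.single j 1))).det
        = ∑ q : Fin n, J' p q (Pi.single j 1) *
            (((jacN Φ x).updateRow l (Pi.single j 1)).updateRow p (Pi.single q 1)).det :=
      fun j => det_updateRow_expand _ _ _
    rw [Finset.sum_congr rfl fun j (_ : j ∈ Finset.univ) => hstep2 j]
    exact sum_symm_antisymm_zero (fun a b => J' p b (Pi.single a 1))
      (fun a b => (((jacN Φ x).updateRow l (Pi.single a 1)).updateRow p (Pi.single b 1)).det)
      (fun a b => hS p b a)
      (fun a b => det_double_update_swap _ hlp _ _)
  have hpart1 : ∑ j : Fin n, ∑ l : Fin n, A (Φ x) i l * Dd j l (Pi.single j 1) = 0 := by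
    rw [Finset.sum_comm]
    refine Finset.sum_eq_zero fun l _ => ?_
    rw [← Finset.mul_sum, hPiola l, mul_zero]
  rw [hpart1, zero_add]
  -- the main part
  have hkey : ∀ m' l : Fin n, ∑ j : Fin n, jacN Φ x m' j * (jacN Φ x).adjugate j l
      = (jacN Φ x).det * (if m' = l then 1 else 0) := by
    intro m' l
    have h := congrFun (congrFun (Matrix.mul_adjugate (jacN Φ x)) m') l
    rw [Matrix.mul_apply] at h
    rw [h, Matrix.smul_apply, Matrix.one_apply, smul_eq_mul]
  calc ∑ j : Fin n, ∑ l : Fin n,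
        ((jacN Φ x).updateRow l (Pi.single j 1)).det * α' l (Pi.single j 1)
      = ∑ j : Fin n, ∑ l : Fin n, ∑ m' : Fin n, (jacN Φ x).adjugate j l *
          (jacN Φ x m' j * pdn m' (fun z => A z i l) (Φ x)) := by
        refine Finset.sum_congr rfl fun j _ => Finset.sum_congr rfl fun l _ => ?_
        rw [(Matrix.adjugate_apply (jacN Φ x) j l).symm] -- ?
        rw [hαval l j, Finset.mul_sum]
    _ = ∑ l : Fin n, ∑ m' : Fin n,
          (∑ j : Fin n, jacN Φ x m' j * (jacN Φ x).adjugate j l) *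
            pdn m' (fun z => A z i l) (Φ x) := by
        rw [Finset.sum_comm]
        refine Finset.sum_congr rfl fun l _ => ?_
        rw [Finset.sum_comm]
        refine Finset.sum_congr rfl fun m' _ => ?_
        rw [Finset.sum_mul]
        exact Finset.sum_congr rfl fun j _ => by ring
    _ = ∑ l : Fin n, (jacN Φ x).det * pdn l (fun z => A z i l) (Φ x) := by
        refine Finset.sum_congr rfl fun l _ => ?_
        rw [Finset.sum_congr rfl fun m' (_ : m' ∈ Finset.univ) => by rw [hkey m' l]]
        simp
    _ = (jacN Φ x).det * ∑ j : Fin n, pdn j (fun y => A y i j) (Φ x) := by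
        rw [Finset.mul_sum]


end
end

section
/- Let Ω = C_r ⊂ ℝ³ and let 𝔸 be a Lipschitz coefficient tensor. For |h| ≤ h₀ define the transformed bilinear form a_h((v,R);(w,Q)) := ∫_Ω det∇T_h ⟨ 𝔸(T_h(x)) ( v, R(∇T_h)^{-1}, ∇v(∇T_h)^{-1}, (det∇T_h)^{-1}(Curl R)(∇T_h)ᵀ ), ( w, Q(∇T_h)^{-1}, ∇w(∇T_h)^{-1}, (det∇T_h)^{-1}(Curl Q)(∇T_h)ᵀ ) ⟩ dx. Then for all u,w ∈ H¹(Ω,ℝ^m) and P,Q ∈ H(Curl;Ω,ℝ^{n×3}) the change-of-variables identity a((u,P);(w∘S_h, 𝒮_h(Q))) = a_h((u∘T_h, 𝒯_h(P));(w,Q)) holds. -/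
open MeasureTheory Set

noncomputable section

/-- The state space `ℝ^m × ℝ^{n×3} × ℝ^{m×3} × ℝ^{n×3}`. -/
abbrev StSp (m n : ℕ) : Type :=
  (Fin m → ℝ) × (Fin n → V3) × (Fin m → V3) × (Fin n → V3)

/-- Scalar product on the state space (Euclidean plus Frobenius products). -/
def sinner {m n : ℕ} (a b : StSp m n) : ℝ :=
  vdot a.1 b.1 + mdot a.2.1 b.2.1 + mdot a.2.2.1 b.2.2.1 + mdot a.2.2.2 b.2.2.2

/-- The bilinear form
`a((u,P);(v,Q)) = ∫_Ω ⟨𝔸(x)(u,P,∇u,Curl P),(v,Q,∇v,Curl Q)⟩ dx`,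
where `Du, CP, Dv, CQ` are the (weak) Jacobians/Curls of `u, P, v, Q`. -/
def bform {m n : ℕ} (𝔸 : V3 → StSp m n →L[ℝ] StSp m n) (Ω : Set V3)
    (u : V3 → Fin m → ℝ) (P : V3 → Fin n → V3)
    (Du : V3 → Fin m → V3) (CP : V3 → Fin n → V3)
    (v : V3 → Fin m → ℝ) (Q : V3 → Fin n → V3)
    (Dv : V3 → Fin m → V3) (CQ : V3 → Fin n → V3) : ℝ :=
  ∫ x in Ω, sinner (𝔸 x (u x, P x, Du x, CP x)) (v x, Q x, Dv x, CQ x)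

/-- Assumption (A1): coercivity of the bilinear form on compactly supported fields. -/
def CoercA1 {m n : ℕ} (Ω : Set V3) (𝔸 : V3 → StSp m n →L[ℝ] StSp m n) (α c : ℝ) : Prop :=
  ∀ (u : V3 → Fin m → ℝ) (Du : V3 → Fin m → V3) (P CP : V3 → Fin n → V3),
    MemH1 Ω u Du → MemHCurl Ω P CP →
    HasCompactSupport u → tsupport u ⊆ Ω →
    HasCompactSupport P → tsupport P ⊆ Ω →
    α * (L2norm Ω Du ^ 2 + L2norm Ω P ^ 2 + L2norm Ω CP ^ 2) - c * L2norm Ω u ^ 2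
      ≤ bform 𝔸 Ω u P Du CP u P Du CP

/-- The transformed bilinear form `a_h` (obtained from `a` by the change of variables
induced by `T_h`):
`a_h((v,R);(w,Q)) = ∫_Ω det∇T_h ⟨𝔸(T_h(x)) (v, R(∇T_h)⁻¹, ∇v(∇T_h)⁻¹, (det∇T_h)⁻¹(Curl R)(∇T_h)ᵀ),
 (w, Q(∇T_h)⁻¹, ∇w(∇T_h)⁻¹, (det∇T_h)⁻¹(Curl Q)(∇T_h)ᵀ)⟩ dx`. -/
def bformH {m n : ℕ} (𝔸 : V3 → StSp m n →L[ℝ] StSp m n) (φ : V3 → ℝ) (h : V3) (Ω : Set V3)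
    (v : V3 → Fin m → ℝ) (R : V3 → Fin n → V3)
    (Dv : V3 → Fin m → V3) (CR : V3 → Fin n → V3)
    (w : V3 → Fin m → ℝ) (Q : V3 → Fin n → V3)
    (Dw : V3 → Fin m → V3) (CQ : V3 → Fin n → V3) : ℝ :=
  ∫ x in Ω, (DTh φ h x).det *
    sinner
      (𝔸 (Th φ h x)
        (v x, mmulR (R x) (DTh φ h x)⁻¹, mmulR (Dv x) (DTh φ h x)⁻¹,
          ((DTh φ h x).det)⁻¹ • mmulR (CR x) (DTh φ h x).transpose))
      (w x, mmulR (Q x) (DTh φ h x)⁻¹, mmulR (Dw x) (DTh φ h x)⁻¹,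
        ((DTh φ h x).det)⁻¹ • mmulR (CQ x) (DTh φ h x).transpose)

/-! ### Auxiliary lemmas -/

lemma mmulR_mmulR {n : ℕ} (A : Fin n → V3) (B C : Matrix (Fin 3) (Fin 3) ℝ) :
    mmulR (mmulR A B) C = mmulR A (B * C) := by
  funext i j
  simp only [mmulR, Matrix.mul_apply, Finset.sum_mul, Finset.mul_sum, mul_assoc]
  rw [Finset.sum_comm]

lemma mmulR_one {n : ℕ} (A : Fin n → V3) : mmulR A (1 : Matrix (Fin 3) (Fin 3) ℝ) = A := by
  funext i j
  simp [mmulR, Matrix.one_apply, mul_ite]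

lemma mmulR_smul {n : ℕ} (d : ℝ) (A : Fin n → V3) (B : Matrix (Fin 3) (Fin 3) ℝ) :
    mmulR (d • A) B = d • mmulR A B := by
  funext i j
  simp [mmulR, Finset.mul_sum, mul_assoc]

lemma det_DTh (φ : V3 → ℝ) (h x : V3) :
    (DTh φ h x).det = 1 + dotProduct (gradv φ x) h := by
  rw [DTh, Matrix.vecMulVec_eq (Fin 1), Matrix.det_one_add_replicateCol_mul_replicateRow]

lemma isOpen_cube (r : ℝ) : IsOpen (Cube r) := by
  have : Cube r = ⋂ i, (fun x : V3 => x i) ⁻¹' (Set.Ioo (-r) r) := by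
    ext x
    simp [Cube, abs_lt, Set.mem_iInter, and_comm]
  rw [this]
  exact isOpen_iInter_of_finite fun i => isOpen_Ioo.preimage (continuous_apply i)

lemma hasFDerivAt_Th (φ : V3 → ℝ) (hφ : ContDiff ℝ (⊤ : ℕ∞) φ) (h x : V3) :
    HasFDerivAt (Th φ h)
      (ContinuousLinearMap.id ℝ V3 + (fderiv ℝ φ x).smulRight h) x := by
  exact (hasFDerivAt_id x).add
    (((hφ.differentiable (by simp)) x).hasFDerivAt.smul_const h)

lemma det_fprime (φ : V3 → ℝ) (h x : V3) :
    (ContinuousLinearMap.id ℝ V3 + (fderiv ℝ φ x).smulRight h).det = (DTh φ h x).det := by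
  rw [ContinuousLinearMap.det, ← LinearMap.det_toMatrix']
  congr 1
  ext i j
  have he : (fun j' => if j' = j then (1 : ℝ) else 0) = e3 j := by
    funext j'
    simp [e3, Pi.single_apply]
  simp only [LinearMap.toMatrix'_apply, ContinuousLinearMap.coe_coe,
    ContinuousLinearMap.add_apply, ContinuousLinearMap.coe_id', id_eq,
    ContinuousLinearMap.smulRight_apply, he, DTh, Matrix.add_apply,
    Matrix.one_apply, Matrix.vecMulVec_apply, Pi.add_apply, Pi.smul_apply,
    smul_eq_mul, gradv, pd]
  by_cases hij : i = j <;> simp [hij, e3, Pi.single_apply, mul_comm]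

lemma det_DTh_pos (r : ℝ) (φ : V3 → ℝ) (h₀ : ℝ) (S : V3 → V3 → V3)
    (hS : IsDiffeoFamily r φ h₀ S) (h : V3) (hh : ‖h‖ ≤ h₀) (x : V3) :
    0 < (DTh φ h x).det := by
  set c : ℝ := dotProduct (gradv φ x) h with hc
  have key : ∀ t : ℝ, 0 ≤ t → t ≤ 1 → 1 + t * c ≠ 0 := by
    intro t ht0 ht1 hzero
    have hnorm : ‖t • h‖ ≤ h₀ := by
      rw [norm_smul, Real.norm_eq_abs, abs_of_nonneg ht0]
      calc t * ‖h‖ ≤ 1 * ‖h‖ := by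
            apply mul_le_mul_of_nonneg_right ht1 (norm_nonneg h)
        _ = ‖h‖ := one_mul _
        _ ≤ h₀ := hh
    have hne := (hS (t • h) hnorm).2.2.2.2.2 x
    apply hne
    rw [det_DTh, dotProduct_smul, smul_eq_mul, ← hc]
    exact hzero
  rw [det_DTh, ← hc]
  by_contra hle
  push_neg at hle
  have hc1 : c ≤ -1 := by linarith
  have hcneg : c < 0 := by linarith
  have ht0 : 0 ≤ -c⁻¹ := by
    have := inv_neg''.mpr hcneg
    linarith
  have ht1 : -c⁻¹ ≤ 1 := by
    nlinarith [mul_inv_cancel₀ hcneg.ne, inv_neg''.mpr hcneg]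
  exact key (-c⁻¹) ht0 ht1 (by rw [neg_mul, inv_mul_cancel₀ hcneg.ne]; ring)

lemma image_Th (r : ℝ) (φ : V3 → ℝ) (h₀ : ℝ) (S : V3 → V3 → V3)
    (hS : IsDiffeoFamily r φ h₀ S) (h : V3) (hh : ‖h‖ ≤ h₀) :
    Th φ h '' Cube r = Cube r := by
  obtain ⟨_, hST, hTS, hTmaps, hSmaps, _⟩ := hS h hh
  apply Set.Subset.antisymm
  · exact Set.image_subset_iff.mpr hTmaps
  · intro x hx
    exact ⟨S h x, hSmaps hx, hTS x⟩

/-- **Change-of-variables identity** (formula (3.17)): for `|h| ≤ h₀`,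
`a((u,P);(w∘S_h, 𝒮_h(Q))) = a_h((u∘T_h, 𝒯_h(P));(w,Q))`.
Here `𝒮_h(Q) = (Q∘S_h)∇S_h` with `∇S_h = (∇T_h∘S_h)⁻¹`; the Jacobian of `w∘S_h` is
`(∇w∘S_h)∇S_h`, the Curl of `𝒮_h(Q)` is `det∇S_h (Curl Q∘S_h)(∇S_h)^{-T}`, the Jacobian of
`u∘T_h` is `(∇u∘T_h)∇T_h`, and the Curl of `𝒯_h(P)` is `det∇T_h (Curl P∘T_h)(∇T_h)^{-T}`. -/
theorem change_of_variables_identity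
    (r ρ h₀ : ℝ) (hρ : 0 < ρ) (hρr : ρ < r) (hh₀ : 0 < h₀)
    (φ : V3 → ℝ) (hφ : CutOff ρ φ)
    (S : V3 → V3 → V3) (hS : IsDiffeoFamily r φ h₀ S)
    (m n : ℕ)
    (𝔸 : V3 → StSp m n →L[ℝ] StSp m n)
    (hALip : ∃ K : NNReal, LipschitzOnWith K 𝔸 (closure (Cube r))) :
    ∀ h : V3, ‖h‖ ≤ h₀ →
      ∀ (u : V3 → Fin m → ℝ) (Du : V3 → Fin m → V3) (P CP : V3 → Fin n → V3)
        (w : V3 → Fin m → ℝ) (Dw : V3 → Fin m → V3) (Q CQ : V3 → Fin n → V3),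
        MemH1 (Cube r) u Du → MemHCurl (Cube r) P CP →
        MemH1 (Cube r) w Dw → MemHCurl (Cube r) Q CQ →
        bform 𝔸 (Cube r) u P Du CP
            (fun x => w (S h x))
            (fun x => mmulR (Q (S h x)) ((DTh φ h (S h x))⁻¹))
            (fun x => mmulR (Dw (S h x)) ((DTh φ h (S h x))⁻¹))
            (fun x => ((DTh φ h (S h x)).det)⁻¹
              • mmulR (CQ (S h x)) ((DTh φ h (S h x)).transpose))
          = bformH 𝔸 φ h (Cube r)
              (fun x => u (Th φ h x)) (piolaT φ h P)
              (fun x => mmulR (Du (Th φ h x)) (DTh φ h x)) (curlTrans φ h CP)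
              w Q Dw CQ := by
  intro h hh u Du P CP w Dw Q CQ hu hP hw hQ
  obtain ⟨hScd, hST, hTS, hTmaps, hSmaps, hdetne⟩ := hS h hh
  have hdpos : ∀ x, 0 < (DTh φ h x).det := det_DTh_pos r φ h₀ S hS h hh
  set f' : V3 → V3 →L[ℝ] V3 :=
    fun x => ContinuousLinearMap.id ℝ V3 + (fderiv ℝ φ x).smulRight h with hf'def
  have hf' : ∀ x ∈ Cube r, HasFDerivWithinAt (Th φ h) (f' x) (Cube r) x :=
    fun x _ => (hasFDerivAt_Th φ hφ.1 h x).hasFDerivWithinAt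
  have hinj : Set.InjOn (Th φ h) (Cube r) :=
    (Function.LeftInverse.injective hST).injOn
  have hmeas : MeasurableSet (Cube r) := (isOpen_cube r).measurableSet
  unfold bform bformH
  rw [← image_Th r φ h₀ S hS h hh,
    integral_image_eq_integral_abs_det_fderiv_smul volume hmeas hf' hinj,
    image_Th r φ h₀ S hS h hh]
  apply integral_congr_ae
  filter_upwards with x
  have hMd : IsUnit (DTh φ h x).det := (hdpos x).ne'.isUnit
  have hMM : (DTh φ h x) * (DTh φ h x)⁻¹ = 1 := Matrix.mul_nonsing_inv _ hMd
  have hMMT : (DTh φ h x)⁻¹.transpose * (DTh φ h x).transpose = 1 := by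
    rw [← Matrix.transpose_mul, hMM, Matrix.transpose_one]
  have hdet : (f' x).det = (DTh φ h x).det := det_fprime φ h x
  have habs : |(f' x).det| = (DTh φ h x).det := by
    rw [hdet]; exact abs_of_pos (hdpos x)
  rw [habs, smul_eq_mul, hST x]
  congr 2
  · -- first argument of sinner
    congr 1
    refine Prod.ext rfl (Prod.ext ?_ (Prod.ext ?_ ?_))
    · show P (Th φ h x) = mmulR (piolaT φ h P x) (DTh φ h x)⁻¹
      rw [piolaT, mmulR_mmulR, hMM, mmulR_one]
    · show Du (Th φ h x) = mmulR (mmulR (Du (Th φ h x)) (DTh φ h x)) (DTh φ h x)⁻¹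
      rw [mmulR_mmulR, hMM, mmulR_one]
    · show CP (Th φ h x)
        = ((DTh φ h x).det)⁻¹ • mmulR (curlTrans φ h CP x) (DTh φ h x).transpose
      rw [curlTrans, mmulR_smul, mmulR_mmulR, hMMT, mmulR_one, smul_smul,
        inv_mul_cancel₀ (hdpos x).ne', one_smul]

end
end
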